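/- The function s ↦ φ(Φ⁻¹(s)) on (0,1), where φ, Φ are the standard normal pdf and cdf, attains its maximum value 1/√(2π) at s = 1/2, is concave, and extends continuously to [0,1] with value 0 at the endpoints. -/

import Mathlib

open MeasureTheory Set Filter Topology

/-- Standard normal pdf `φ`. -/
noncomputable def stdnpdf (t : ℝ) : ℝ := (Real.sqrt (2 * Real.pi))⁻¹ * Real.exp (-t ^ 2 / 2)

/-- Standard normal cdf `Φ`. -/
noncomputable def stdncdf (t : ℝ) : ℝ := ∫ s in Set.Iic t, stdnpdf s

/-- Inverse of the standard normal cdf, `Φ⁻¹ : (0,1) → ℝ`. -/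
noncomputable def stdninv : ℝ → ℝ := Function.invFun stdncdf

/-- Continuous extension of `s ↦ φ(Φ⁻¹(s))` to `[0,1]`, with value `0` at the endpoints. -/
noncomputable def phiPhiInv (s : ℝ) : ℝ :=
  if s = 0 ∨ s = 1 then 0 else stdnpdf (stdninv s)

lemma stdnpdf_eq_gauss : stdnpdf = ProbabilityTheory.gaussianPDFReal 0 1 := by
  funext x
  simp [stdnpdf, ProbabilityTheory.gaussianPDFReal]

lemma stdnpdf_pos (t : ℝ) : 0 < stdnpdf t := by
  rw [stdnpdf_eq_gauss]
  exact ProbabilityTheory.gaussianPDFReal_pos 0 1 t one_ne_zero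

lemma continuous_stdnpdf : Continuous stdnpdf := by
  unfold stdnpdf
  fun_prop

lemma integrable_stdnpdf : Integrable stdnpdf := by
  rw [stdnpdf_eq_gauss]
  exact ProbabilityTheory.integrable_gaussianPDFReal 0 1

lemma integral_stdnpdf : ∫ t, stdnpdf t = 1 := by
  rw [stdnpdf_eq_gauss]
  exact ProbabilityTheory.integral_gaussianPDFReal_eq_one 0 one_ne_zero

lemma stdnpdf_le (t : ℝ) : stdnpdf t ≤ (Real.sqrt (2 * Real.pi))⁻¹ := by
  have h : Real.exp (-t ^ 2 / 2) ≤ 1 := by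
    rw [show (1:ℝ) = Real.exp 0 by simp]
    apply Real.exp_le_exp.2
    nlinarith [sq_nonneg t]
  calc stdnpdf t ≤ (Real.sqrt (2 * Real.pi))⁻¹ * 1 := by
        unfold stdnpdf
        apply mul_le_mul_of_nonneg_left h
        positivity
    _ = _ := mul_one _

lemma hasDerivAt_stdncdf (t : ℝ) : HasDerivAt stdncdf (stdnpdf t) t := by
  have key : HasDerivAt (fun u => ∫ x in (0:ℝ)..u, stdnpdf x) (stdnpdf t) t :=
    intervalIntegral.integral_hasDerivAt_right
      (integrable_stdnpdf.intervalIntegrable)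
      (continuous_stdnpdf.stronglyMeasurableAtFilter _ _)
      continuous_stdnpdf.continuousAt
  have heq : ∀ u : ℝ, stdncdf u = stdncdf 0 + ∫ x in (0:ℝ)..u, stdnpdf x := by
    intro u
    have := intervalIntegral.integral_Iic_sub_Iic (integrable_stdnpdf.integrableOn)
      (integrable_stdnpdf.integrableOn) (f := stdnpdf) (a := (0:ℝ)) (b := u) (μ := volume)
    unfold stdncdf
    linarith
  have := (key.const_add (stdncdf 0))
  apply this.congr_of_eventuallyEq
  filter_upwards with u using heq u

lemma continuous_stdncdf : Continuous stdncdf :=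
  continuous_iff_continuousAt.2 fun t => (hasDerivAt_stdncdf t).continuousAt

lemma strictMono_stdncdf : StrictMono stdncdf := by
  intro a b hab
  have h := intervalIntegral.integral_Iic_sub_Iic (integrable_stdnpdf.integrableOn)
    (integrable_stdnpdf.integrableOn) (f := stdnpdf) (a := a) (b := b) (μ := volume)
  have hpos : 0 < ∫ x in a..b, stdnpdf x :=
    intervalIntegral.intervalIntegral_pos_of_pos
      (integrable_stdnpdf.intervalIntegrable) stdnpdf_pos hab
  unfold stdncdf
  linarith

lemma stdncdf_pos (t : ℝ) : 0 < stdncdf t := by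
  have h := intervalIntegral.integral_Iic_sub_Iic (integrable_stdnpdf.integrableOn)
    (integrable_stdnpdf.integrableOn) (f := stdnpdf) (a := t - 1) (b := t) (μ := volume)
  have hpos : 0 < ∫ x in (t-1)..t, stdnpdf x :=
    intervalIntegral.intervalIntegral_pos_of_pos
      (integrable_stdnpdf.intervalIntegrable) stdnpdf_pos (by linarith)
  have hnn : 0 ≤ ∫ x in Iic (t - 1), stdnpdf x :=
    setIntegral_nonneg measurableSet_Iic fun x _ => (stdnpdf_pos x).le
  unfold stdncdf
  linarith

lemma stdncdf_add_Ioi (t : ℝ) : stdncdf t + ∫ x in Ioi t, stdnpdf x = 1 := by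
  rw [stdncdf, intervalIntegral.integral_Iic_add_Ioi (integrable_stdnpdf.integrableOn)
    (integrable_stdnpdf.integrableOn), integral_stdnpdf]

lemma stdncdf_lt_one (t : ℝ) : stdncdf t < 1 := by
  have h := stdncdf_add_Ioi t
  have h2 := intervalIntegral.integral_Iic_sub_Iic (integrable_stdnpdf.integrableOn)
    (integrable_stdnpdf.integrableOn) (f := stdnpdf) (a := t) (b := t + 1) (μ := volume)
  have hpos : 0 < ∫ x in t..(t+1), stdnpdf x :=
    intervalIntegral.intervalIntegral_pos_of_pos
      (integrable_stdnpdf.intervalIntegrable) stdnpdf_pos (by linarith)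
  have hmono : (∫ x in Ioc t (t+1), stdnpdf x) ≤ ∫ x in Ioi t, stdnpdf x := by
    apply setIntegral_mono_set (integrable_stdnpdf.integrableOn)
      (ae_of_all _ fun x => (stdnpdf_pos x).le)
    exact HasSubset.Subset.eventuallyLE Ioc_subset_Ioi_self
  rw [intervalIntegral.integral_of_le (by linarith)] at hpos
  linarith

lemma tendsto_stdncdf_atBot : Tendsto stdncdf atBot (𝓝 0) := by
  have key : Tendsto (fun t : ℝ => ∫ x in t..(0:ℝ), stdnpdf x) atBot (𝓝 (stdncdf 0)) :=
    intervalIntegral_tendsto_integral_Iic 0 (integrable_stdnpdf.integrableOn) tendsto_id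
  have : Tendsto (fun t : ℝ => stdncdf 0 - ∫ x in t..(0:ℝ), stdnpdf x) atBot
      (𝓝 (stdncdf 0 - stdncdf 0)) := tendsto_const_nhds.sub key
  rw [sub_self] at this
  apply this.congr
  intro t
  have := intervalIntegral.integral_Iic_sub_Iic (integrable_stdnpdf.integrableOn)
    (integrable_stdnpdf.integrableOn) (f := stdnpdf) (a := t) (b := 0) (μ := volume)
  unfold stdncdf
  linarith

lemma tendsto_stdncdf_atTop : Tendsto stdncdf atTop (𝓝 1) := by
  have key : Tendsto (fun t : ℝ => ∫ x in (0:ℝ)..t, stdnpdf x) atTop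
      (𝓝 (∫ x in Ioi (0:ℝ), stdnpdf x)) :=
    intervalIntegral_tendsto_integral_Ioi 0 (integrable_stdnpdf.integrableOn) tendsto_id
  have h1 : Tendsto (fun t : ℝ => stdncdf 0 + ∫ x in (0:ℝ)..t, stdnpdf x) atTop
      (𝓝 (stdncdf 0 + ∫ x in Ioi (0:ℝ), stdnpdf x)) := tendsto_const_nhds.add key
  rw [stdncdf_add_Ioi 0] at h1
  apply h1.congr
  intro t
  have := intervalIntegral.integral_Iic_sub_Iic (integrable_stdnpdf.integrableOn)
    (integrable_stdnpdf.integrableOn) (f := stdnpdf) (a := (0:ℝ)) (b := t) (μ := volume)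
  unfold stdncdf
  linarith

lemma exists_stdncdf_eq {s : ℝ} (hs : s ∈ Ioo (0:ℝ) 1) : ∃ t, stdncdf t = s := by
  obtain ⟨a, ha⟩ := (tendsto_stdncdf_atBot.eventually_lt_const hs.1).exists
  obtain ⟨b, hb⟩ := (tendsto_stdncdf_atTop.eventually_const_lt hs.2).exists
  have hab : a ≤ b := (strictMono_stdncdf.lt_iff_lt.1 (ha.trans hb)).le
  obtain ⟨t, _, ht⟩ := intermediate_value_Icc hab continuous_stdncdf.continuousOn
    ⟨ha.le, hb.le⟩
  exact ⟨t, ht⟩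

lemma stdncdf_stdninv {s : ℝ} (hs : s ∈ Ioo (0:ℝ) 1) : stdncdf (stdninv s) = s :=
  Function.invFun_eq (exists_stdncdf_eq hs)

lemma stdninv_stdncdf (t : ℝ) : stdninv (stdncdf t) = t :=
  Function.leftInverse_invFun strictMono_stdncdf.injective t

lemma stdncdf_zero : stdncdf 0 = 1/2 := by
  have h1 := stdncdf_add_Ioi 0
  have h2 : (∫ x in Iic (0:ℝ), stdnpdf x) = ∫ x in Ioi (0:ℝ), stdnpdf x := by
    rw [show (Ioi (0:ℝ)) = Ioi (-(0:ℝ)) by norm_num, ← integral_comp_neg_Iic]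
    congr 1
    funext x
    unfold stdnpdf
    congr 1
    ring_nf
  unfold stdncdf at *
  linarith

lemma stdninv_half : stdninv (1/2) = 0 := by
  rw [← stdncdf_zero]
  exact stdninv_stdncdf 0

lemma strictMonoOn_stdninv : StrictMonoOn stdninv (Ioo (0:ℝ) 1) := by
  intro a ha b hb hab
  apply strictMono_stdncdf.lt_iff_lt.1
  rwa [stdncdf_stdninv ha, stdncdf_stdninv hb]

lemma image_stdninv : stdninv '' Ioo (0:ℝ) 1 = univ := by
  apply eq_univ_of_forall
  intro t
  exact ⟨stdncdf t, ⟨stdncdf_pos t, stdncdf_lt_one t⟩, stdninv_stdncdf t⟩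

lemma continuousAt_stdninv {s : ℝ} (hs : s ∈ Ioo (0:ℝ) 1) : ContinuousAt stdninv s := by
  apply strictMonoOn_stdninv.continuousAt_of_image_mem_nhds (isOpen_Ioo.mem_nhds hs)
  rw [image_stdninv]
  exact univ_mem

lemma hasDerivAt_stdninv {s : ℝ} (hs : s ∈ Ioo (0:ℝ) 1) :
    HasDerivAt stdninv (stdnpdf (stdninv s))⁻¹ s := by
  apply HasDerivAt.of_local_left_inverse (continuousAt_stdninv hs)
    (hasDerivAt_stdncdf (stdninv s)) (stdnpdf_pos _).ne'
  filter_upwards [isOpen_Ioo.mem_nhds hs] with y hy using stdncdf_stdninv hy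

lemma hasDerivAt_stdnpdf (t : ℝ) : HasDerivAt stdnpdf (-t * stdnpdf t) t := by
  have h1 : HasDerivAt (fun t : ℝ => -t ^ 2 / 2) (-t) t := by
    have := ((hasDerivAt_pow 2 t).neg.div_const 2)
    refine this.congr_deriv ?_
    simp
    ring
  have h2 := (Real.hasDerivAt_exp (-t ^ 2 / 2)).comp t h1
  have h3 := h2.const_mul (Real.sqrt (2 * Real.pi))⁻¹
  refine h3.congr_deriv ?_
  unfold stdnpdf
  ring

lemma hasDerivAt_phiinv {s : ℝ} (hs : s ∈ Ioo (0:ℝ) 1) :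
    HasDerivAt (fun s => stdnpdf (stdninv s)) (-(stdninv s)) s := by
  have h := (hasDerivAt_stdnpdf (stdninv s)).comp s (hasDerivAt_stdninv hs)
  refine h.congr_deriv ?_
  rw [neg_mul, neg_mul, mul_assoc, mul_inv_cancel₀ (stdnpdf_pos _).ne', mul_one]

lemma tendsto_stdnpdf_atTop : Tendsto stdnpdf atTop (𝓝 0) := by
  have harg : Tendsto (fun t : ℝ => -t ^ 2 / 2) atTop atBot := by
    apply Tendsto.atBot_div_const two_pos
    exact tendsto_neg_atBot_iff.2 (tendsto_pow_atTop two_ne_zero)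
  have := (Real.tendsto_exp_atBot.comp harg).const_mul (Real.sqrt (2 * Real.pi))⁻¹
  rw [mul_zero] at this
  exact this

lemma tendsto_stdnpdf_atBot : Tendsto stdnpdf atBot (𝓝 0) := by
  have harg : Tendsto (fun t : ℝ => -t ^ 2 / 2) atBot atBot := by
    apply Tendsto.atBot_div_const two_pos
    apply tendsto_neg_atBot_iff.2
    have := (tendsto_pow_atTop (two_ne_zero)).comp tendsto_neg_atBot_atTop (α := ℝ)
    apply this.congr
    intro t
    simp [neg_pow]
  have := (Real.tendsto_exp_atBot.comp harg).const_mul (Real.sqrt (2 * Real.pi))⁻¹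
  rw [mul_zero] at this
  exact this

lemma tendsto_stdninv_zero : Tendsto stdninv (𝓝[>] (0:ℝ)) atBot := by
  apply tendsto_atBot.2
  intro M
  have hmem : Ioo (0:ℝ) (stdncdf (M - 1)) ∈ 𝓝[>] (0:ℝ) :=
    Ioo_mem_nhdsGT_of_mem ⟨le_refl 0, stdncdf_pos _⟩
  filter_upwards [hmem] with s hs
  have hs1 : s ∈ Ioo (0:ℝ) 1 := ⟨hs.1, hs.2.trans (stdncdf_lt_one _)⟩
  have : stdninv s < M - 1 := by
    apply strictMono_stdncdf.lt_iff_lt.1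
    rw [stdncdf_stdninv hs1]
    exact hs.2
  linarith

lemma tendsto_stdninv_one : Tendsto stdninv (𝓝[<] (1:ℝ)) atTop := by
  apply tendsto_atTop.2
  intro M
  have hmem : Ioo (stdncdf (M + 1)) 1 ∈ 𝓝[<] (1:ℝ) :=
    Ioo_mem_nhdsLT_of_mem ⟨stdncdf_lt_one _, le_refl 1⟩
  filter_upwards [hmem] with s hs
  have hs1 : s ∈ Ioo (0:ℝ) 1 := ⟨(stdncdf_pos _).trans hs.1, hs.2⟩
  have : M + 1 < stdninv s := by
    apply strictMono_stdncdf.lt_iff_lt.1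
    rw [stdncdf_stdninv hs1]
    exact hs.1
  linarith

/-- `s ↦ φ(Φ⁻¹(s))` attains its maximum `1/√(2π)` at `s = 1/2`, is concave
on `(0,1)`, and extends continuously to `[0,1]` with value `0` at the endpoints. -/
theorem stmt_16 :
    stdnpdf (stdninv (1/2)) = 1 / Real.sqrt (2 * Real.pi) ∧
    (∀ s ∈ Set.Ioo (0:ℝ) 1, stdnpdf (stdninv s) ≤ 1 / Real.sqrt (2 * Real.pi)) ∧
    ConcaveOn ℝ (Set.Ioo (0:ℝ) 1) (fun s => stdnpdf (stdninv s)) ∧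
    ContinuousOn phiPhiInv (Set.Icc (0:ℝ) 1) ∧
    phiPhiInv 0 = 0 ∧ phiPhiInv 1 = 0 := by
  refine ⟨?_, ?_, ?_, ?_, ?_, ?_⟩
  · rw [stdninv_half]
    unfold stdnpdf
    norm_num
  · intro s _
    rw [one_div]
    exact stdnpdf_le _
  · apply AntitoneOn.concaveOn_of_deriv (convex_Ioo 0 1)
    · exact fun s hs => (hasDerivAt_phiinv hs).continuousAt.continuousWithinAt
    · rw [interior_Ioo]
      exact fun s hs => (hasDerivAt_phiinv hs).differentiableAt.differentiableWithinAt
    · rw [interior_Ioo]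
      intro a ha b hb hab
      rw [(hasDerivAt_phiinv ha).deriv, (hasDerivAt_phiinv hb).deriv]
      exact neg_le_neg (strictMonoOn_stdninv.monotoneOn ha hb hab)
  · intro s hs
    rcases eq_or_ne s 0 with rfl | hs0
    · -- continuity at 0
      have h0 : phiPhiInv 0 = 0 := by simp [phiPhiInv]
      have key : Tendsto phiPhiInv (𝓝[>] (0:ℝ)) (𝓝 0) := by
        apply (tendsto_stdnpdf_atBot.comp tendsto_stdninv_zero).congr'
        filter_upwards [Ioo_mem_nhdsGT_of_mem (Set.left_mem_Ico.2 one_pos)] with y hy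
        simp [phiPhiInv, hy.1.ne', hy.2.ne, Function.comp]
      have hIoi : ContinuousWithinAt phiPhiInv (Ioi 0) 0 := by
        rw [ContinuousWithinAt, h0]; exact key
      exact ((continuousWithinAt_insert_self).2 hIoi).mono
        (fun x hx => by rcases eq_or_ne x 0 with rfl | h; · exact mem_insert _ _
                        · exact mem_insert_of_mem _ (lt_of_le_of_ne hx.1 (Ne.symm h)))
    rcases eq_or_ne s 1 with rfl | hs1
    · -- continuity at 1
      have h0 : phiPhiInv 1 = 0 := by simp [phiPhiInv]
      have key : Tendsto phiPhiInv (𝓝[<] (1:ℝ)) (𝓝 0) := by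
        apply (tendsto_stdnpdf_atTop.comp tendsto_stdninv_one).congr'
        filter_upwards [Ioo_mem_nhdsLT_of_mem (Set.right_mem_Ioc.2 one_pos)] with y hy
        simp [phiPhiInv, hy.1.ne', hy.2.ne, Function.comp]
      have hIio : ContinuousWithinAt phiPhiInv (Iio 1) 1 := by
        rw [ContinuousWithinAt, h0]; exact key
      exact ((continuousWithinAt_insert_self).2 hIio).mono
        (fun x hx => by rcases eq_or_ne x 1 with rfl | h; · exact mem_insert _ _
                        · exact mem_insert_of_mem _ (lt_of_le_of_ne hx.2 h))
    · have hsIoo : s ∈ Ioo (0:ℝ) 1 :=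
        ⟨lt_of_le_of_ne hs.1 (Ne.symm hs0), lt_of_le_of_ne hs.2 hs1⟩
      apply ContinuousAt.continuousWithinAt
      apply ((hasDerivAt_phiinv hsIoo).continuousAt).congr
      filter_upwards [isOpen_Ioo.mem_nhds hsIoo] with y hy
      simp [phiPhiInv, hy.1.ne', hy.2.ne]
  · simp [phiPhiInv]
  · simp [phiPhiInv]
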